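/- Generically, resolvents are asymptotically regular: the set {T : X → X firmly nonexpansive : for every x ∈ X, ‖T^{n+1}x − Tⁿx‖ → 0 as n → ∞} is a dense G_δ in (J(X), ρ̂): there exists a sequence (O_n) of subsets of J(X), each ρ̂-open in J(X) and ρ̂-dense in J(X), whose intersection equals this set. -/

import Mathlib

/-!
Asymptotic regularity is tested at the single point `0`: the maps `T` with
`‖T^[N+1] 0 - T^[N] 0‖ < 1/(n+1)` for some `N` form a `ρ̂`-open set, since finitely many
iterates depend continuously on `T` for the locally uniform topology that `ρ̂` induces. It is
dense because `c • T` with `c < 1` is a contraction, hence asymptotically regular, and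
`c • T → T` as `c → 1`. For a firmly nonexpansive `T` the steps `‖T^[k+1] x - T^[k] x‖`
are nonincreasing, so the intersection over `n` consists of the maps that are asymptotically
regular at `0`; and asymptotic regularity at one point spreads to all points, because
`∑ₖ ‖(I - T) T^[k] x - (I - T) T^[k] y‖² ≤ ‖x - y‖²`.
-/

open RealInnerProductSpace Filter

variable {X : Type*} [NormedAddCommGroup X] [InnerProductSpace ℝ X] [CompleteSpace X]

/-- `T` is nonexpansive. -/
def Nonexpansive (T : X → X) : Prop := ∀ x y : X, ‖T x - T y‖ ≤ ‖x - y‖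

/-- `T` is firmly nonexpansive. -/
def FirmlyNonexpansive (T : X → X) : Prop :=
  ∀ x y : X, ‖T x - T y‖ ^ 2 ≤ ⟪x - y, T x - T y⟫

/-- `‖T₁ - T₂‖ₙ = sup_{‖x‖ ≤ n} ‖T₁ x - T₂ x‖`. -/
noncomputable def ballSup (T₁ T₂ : X → X) (n : ℕ) : ℝ :=
  sSup {r : ℝ | ∃ x : X, ‖x‖ ≤ (n : ℝ) ∧ r = ‖T₁ x - T₂ x‖}

/-- The metric `ρ` on nonexpansive maps. -/
noncomputable def rho (T₁ T₂ : X → X) : ℝ :=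
  ∑' n : ℕ, (1 / 2 ^ (n + 1)) *
    (ballSup T₁ T₂ (n + 1) / (1 + ballSup T₁ T₂ (n + 1)))

/-- The metric `ρ̂` on firmly nonexpansive maps: `ρ̂(T₁,T₂) = ρ(2T₁ - Id, 2T₂ - Id)`. -/
noncomputable def rhoHat (T₁ T₂ : X → X) : ℝ :=
  rho (fun x => (2 : ℝ) • T₁ x - x) (fun x => (2 : ℝ) • T₂ x - x)

/-- `T` is super-regular with limit point `xT`. -/
def SuperRegularAt (T : X → X) (xT : X) : Prop :=
  ∀ s : ℝ, 0 < s → ∀ ε : ℝ, 0 < ε → ∃ N : ℕ, ∀ n ≥ N, ∀ x : X, ‖x‖ ≤ s → ‖T^[n] x - xT‖ < ε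

/-- `T` is super-regular. -/
def SuperRegular (T : X → X) : Prop := ∃ xT : X, SuperRegularAt T xT

/-- `T` is a (Banach) contraction. -/
def Contraction (T : X → X) : Prop :=
  ∃ l : ℝ, 0 ≤ l ∧ l < 1 ∧ ∀ x y : X, ‖T x - T y‖ ≤ l * ‖x - y‖

open Topology

def AsymptoticallyRegularAt {E : Type*} [NormedAddCommGroup E] (T : E → E) (x : E) : Prop :=
  Tendsto (fun n : ℕ => ‖T^[n + 1] x - T^[n] x‖) atTop (𝓝 0)

theorem Antitone.tendsto_zero_iff_forall_exists_lt_one_div {a : ℕ → ℝ} (ha : Antitone a)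
    (h0 : ∀ k, 0 ≤ a k) :
    Tendsto a atTop (𝓝 0) ↔ ∀ n : ℕ, ∃ N, a N < 1 / ((n : ℝ) + 1) := by
  refine ⟨fun h n => (h.eventually (gt_mem_nhds (by positivity))).exists, fun h => ?_⟩
  refine tendsto_order.2 ⟨fun b hb => Eventually.of_forall fun k => hb.trans_le (h0 k),
    fun b hb => ?_⟩
  obtain ⟨n, hn⟩ := exists_nat_one_div_lt hb
  obtain ⟨N, hN⟩ := h n
  exact eventually_atTop.2 ⟨N, fun k hk => ((ha hk).trans_lt hN).trans hn⟩

section Nonexpansive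

variable {E : Type*} [NormedAddCommGroup E] {T : E → E}

theorem Nonexpansive.antitone_norm_iterate_succ_sub (hT : Nonexpansive T) (x : E) :
    Antitone fun k => ‖T^[k + 1] x - T^[k] x‖ := by
  refine antitone_nat_of_succ_le fun k => ?_
  rw [Function.iterate_succ_apply' T (k + 1), Function.iterate_succ_apply' T k]
  exact hT _ _

theorem Nonexpansive.norm_sub_le_add_norm {A B : E → E} (hA : Nonexpansive A)
    (hB : Nonexpansive B) (x : E) : ‖A x - B x‖ ≤ 2 * ‖x‖ + ‖A 0 - B 0‖ := by
  have hA0 := hA x 0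
  have hB0 := hB 0 x
  rw [sub_zero] at hA0
  rw [zero_sub, norm_neg] at hB0
  linarith [norm_sub_le_norm_sub_add_norm_sub (A x) (A 0) (B x),
    norm_sub_le_norm_sub_add_norm_sub (A 0) (B 0) (B x)]

theorem Nonexpansive.asymptoticallyRegularAt_const_smul [NormedSpace ℝ E] (hT : Nonexpansive T)
    {c : ℝ} (hc0 : 0 ≤ c) (hc1 : c < 1) (x : E) : AsymptoticallyRegularAt (c • T) x := by
  have hlip : LipschitzWith (Real.toNNReal c) (c • T) := .of_dist_le_mul fun y z => by
    rw [Real.coe_toNNReal _ hc0, dist_eq_norm, dist_eq_norm, Pi.smul_apply, Pi.smul_apply,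
      ← smul_sub, norm_smul, Real.norm_of_nonneg hc0]
    exact mul_le_mul_of_nonneg_left (hT _ _) hc0
  have hgeom : Tendsto (fun n : ℕ => dist x ((c • T) x) * c ^ n) atTop (𝓝 0) := by
    simpa using (tendsto_pow_atTop_nhds_zero_of_lt_one hc0 hc1).const_mul (dist x ((c • T) x))
  refine squeeze_zero (fun _ => norm_nonneg _) (fun n => ?_) hgeom
  have := hlip.dist_iterate_succ_le_geometric x n
  rwa [Real.coe_toNNReal _ hc0, dist_comm, dist_eq_norm] at this

end Nonexpansive

section FirmlyNonexpansive

variable {E : Type*} [NormedAddCommGroup E] [InnerProductSpace ℝ E] {T : E → E}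

theorem FirmlyNonexpansive.nonexpansive (hT : FirmlyNonexpansive T) : Nonexpansive T := by
  intro x y
  have h := (hT x y).trans (real_inner_le_norm _ _)
  nlinarith [norm_nonneg (T x - T y), norm_nonneg (x - y)]

theorem FirmlyNonexpansive.norm_sub_sq_add_norm_sub_sq_le (hT : FirmlyNonexpansive T) (x y : E) :
    ‖T x - T y‖ ^ 2 + ‖(x - T x) - (y - T y)‖ ^ 2 ≤ ‖x - y‖ ^ 2 := by
  have e : (x - T x) - (y - T y) = (x - y) - (T x - T y) := by abel
  rw [e, norm_sub_sq_real (x - y)]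
  linarith [hT x y]

theorem FirmlyNonexpansive.nonexpansive_reflection (hT : FirmlyNonexpansive T) :
    Nonexpansive fun x => (2 : ℝ) • T x - x := by
  intro x y
  have e : ((2 : ℝ) • T x - x) - ((2 : ℝ) • T y - y) =
      (2 : ℝ) • (T x - T y) - (x - y) := by
    rw [smul_sub]; abel
  have hsq : ‖((2 : ℝ) • T x - x) - ((2 : ℝ) • T y - y)‖ ^ 2 ≤ ‖x - y‖ ^ 2 := by
    rw [e, norm_sub_sq_real, real_inner_smul_left, norm_smul, real_inner_comm, Real.norm_ofNat]
    nlinarith [hT x y]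
  exact (sq_le_sq₀ (norm_nonneg _) (norm_nonneg _)).1 hsq

theorem FirmlyNonexpansive.const_smul (hT : FirmlyNonexpansive T) {c : ℝ} (hc0 : 0 ≤ c)
    (hc1 : c ≤ 1) : FirmlyNonexpansive (c • T) := by
  intro x y
  simp only [Pi.smul_apply, ← smul_sub, norm_smul, real_inner_smul_right, Real.norm_of_nonneg hc0]
  have h := mul_le_mul_of_nonneg_left (hT x y) hc0
  nlinarith [sq_nonneg ‖T x - T y‖, mul_nonneg hc0 (sub_nonneg.2 hc1)]

theorem FirmlyNonexpansive.sum_range_sq_add_sq_le (hT : FirmlyNonexpansive T) (x y : E) (M : ℕ) :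
    ∑ k ∈ Finset.range M, ‖(T^[k] x - T^[k + 1] x) - (T^[k] y - T^[k + 1] y)‖ ^ 2
      + ‖T^[M] x - T^[M] y‖ ^ 2 ≤ ‖x - y‖ ^ 2 := by
  induction M with
  | zero => simp
  | succ M ih =>
    have h := hT.norm_sub_sq_add_norm_sub_sq_le (T^[M] x) (T^[M] y)
    simp only [← Function.iterate_succ_apply' T M] at h
    rw [Finset.sum_range_succ]
    linarith

theorem FirmlyNonexpansive.summable_sq_norm_sub_iterate (hT : FirmlyNonexpansive T) (x y : E) :
    Summable fun k => ‖(T^[k] x - T^[k + 1] x) - (T^[k] y - T^[k + 1] y)‖ ^ 2 :=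
  summable_of_sum_range_le (fun _ => sq_nonneg _) fun M =>
    (le_add_of_nonneg_right (sq_nonneg _)).trans (hT.sum_range_sq_add_sq_le x y M)

theorem FirmlyNonexpansive.asymptoticallyRegularAt (hT : FirmlyNonexpansive T) {y : E}
    (hy : AsymptoticallyRegularAt T y) (x : E) : AsymptoticallyRegularAt T x := by
  have hu : Tendsto (fun k => ‖(T^[k] x - T^[k + 1] x) - (T^[k] y - T^[k + 1] y)‖)
      atTop (𝓝 0) := by
    simpa [Real.sqrt_sq (norm_nonneg _)] using
      (hT.summable_sq_norm_sub_iterate x y).tendsto_atTop_zero.sqrt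
  refine squeeze_zero (fun _ => norm_nonneg _) (fun k => ?_) (by simpa using hy.add hu)
  calc ‖T^[k + 1] x - T^[k] x‖
      = ‖(T^[k + 1] y - T^[k] y) - ((T^[k] x - T^[k + 1] x) - (T^[k] y - T^[k + 1] y))‖ := by
        congr 1; abel
    _ ≤ _ := norm_sub_le _ _

end FirmlyNonexpansive

section Rho

variable {E : Type*} [NormedAddCommGroup E]

theorem ballSup_nonneg (A B : E → E) (n : ℕ) : 0 ≤ ballSup A B n :=
  Real.sSup_nonneg fun _ ⟨_, _, hr⟩ => hr ▸ norm_nonneg _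

theorem ballSup_le {A B : E → E} {n : ℕ} {c : ℝ}
    (h : ∀ x : E, ‖x‖ ≤ n → ‖A x - B x‖ ≤ c) : ballSup A B n ≤ c :=
  csSup_le ⟨_, 0, by simp, rfl⟩ fun _ ⟨x, hx, hr⟩ => hr ▸ h x hx

theorem Nonexpansive.norm_sub_le_ballSup {A B : E → E} (hA : Nonexpansive A)
    (hB : Nonexpansive B) {n : ℕ} {x : E} (hx : ‖x‖ ≤ n) :
    ‖A x - B x‖ ≤ ballSup A B n := by
  refine le_csSup ⟨2 * n + ‖A 0 - B 0‖, ?_⟩ ⟨x, hx, rfl⟩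
  rintro _ ⟨y, hy, rfl⟩
  linarith [hA.norm_sub_le_add_norm hB y]

noncomputable def rhoTerm (A B : E → E) (k : ℕ) : ℝ :=
  1 / 2 ^ (k + 1) * (ballSup A B (k + 1) / (1 + ballSup A B (k + 1)))

theorem rho_eq_tsum_rhoTerm (A B : E → E) : rho A B = ∑' k, rhoTerm A B k := rfl

theorem rhoTerm_nonneg (A B : E → E) (k : ℕ) : 0 ≤ rhoTerm A B k := by
  have := ballSup_nonneg A B (k + 1)
  unfold rhoTerm
  positivity

theorem rhoTerm_le (A B : E → E) (k : ℕ) : rhoTerm A B k ≤ (1 / 2) ^ (k + 1) := by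
  have := ballSup_nonneg A B (k + 1)
  rw [rhoTerm, one_div_pow]
  exact mul_le_of_le_one_right (by positivity) ((div_le_one (by positivity)).2 (by linarith))

theorem summable_rhoTerm (A B : E → E) : Summable (rhoTerm A B) :=
  .of_nonneg_of_le (rhoTerm_nonneg A B) (rhoTerm_le A B)
    ((summable_nat_add_iff 1).2 summable_geometric_two)

theorem rhoTerm_le_rho (A B : E → E) (k : ℕ) : rhoTerm A B k ≤ rho A B :=
  (summable_rhoTerm A B).le_tsum k fun j _ => rhoTerm_nonneg A B j

theorem exists_pos_forall_rho_lt_ballSup_lt (m : ℕ) {δ : ℝ} (hδ : 0 < δ) :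
    ∃ r > 0, ∀ A B : E → E, rho A B < r → ballSup A B (m + 1) < δ := by
  refine ⟨1 / 2 ^ (m + 1) * (δ / (1 + δ)), by positivity, fun A B h => ?_⟩
  by_contra! hle
  have hmono : δ / (1 + δ) ≤ ballSup A B (m + 1) / (1 + ballSup A B (m + 1)) := by
    rw [div_le_div_iff₀ (by positivity) (by linarith)]
    nlinarith
  exact h.not_ge ((mul_le_mul_of_nonneg_left hmono (by positivity)).trans (rhoTerm_le_rho A B m))

theorem tendsto_rho_zero {α : Type*} {l : Filter α} {A : α → E → E} {B : E → E}
    (h : ∀ n, Tendsto (fun a => ballSup (A a) B n) l (𝓝 0)) :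
    Tendsto (fun a => rho (A a) B) l (𝓝 0) := by
  have hterm (k : ℕ) : Tendsto (fun a => rhoTerm (A a) B k) l (𝓝 0) := by
    have hfrac := (h (k + 1)).div ((tendsto_const_nhds (x := (1 : ℝ))).add (h (k + 1)))
      (by norm_num)
    simpa [rhoTerm] using hfrac.const_mul (1 / 2 ^ (k + 1) : ℝ)
  have hdom : ∀ᶠ a in l, ∀ k, ‖rhoTerm (A a) B k‖ ≤ (1 / 2) ^ (k + 1) :=
    .of_forall fun a k => (Real.norm_of_nonneg (rhoTerm_nonneg _ _ k)).trans_le (rhoTerm_le _ _ k)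
  simpa [rho_eq_tsum_rhoTerm] using tendsto_tsum_of_dominated_convergence
    ((summable_nat_add_iff 1).2 summable_geometric_two) hterm hdom

end Rho

section RhoHat

variable {E : Type*} [NormedAddCommGroup E] [InnerProductSpace ℝ E] {T : E → E}

theorem FirmlyNonexpansive.exists_pos_forall_rhoHat_lt_norm_sub_lt
    (hT : FirmlyNonexpansive T) (R : ℝ) {θ : ℝ} (hθ : 0 < θ) :
    ∃ r > 0, ∀ S, FirmlyNonexpansive S → rhoHat S T < r →
      ∀ y : E, ‖y‖ ≤ R → ‖S y - T y‖ < θ := by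
  obtain ⟨r, hr, hball⟩ :=
    exists_pos_forall_rho_lt_ballSup_lt (E := E) ⌈R⌉₊ (by positivity : 0 < 2 * θ)
  refine ⟨r, hr, fun S hS hST y hy => ?_⟩
  have hle := hS.nonexpansive_reflection.norm_sub_le_ballSup hT.nonexpansive_reflection
    (n := ⌈R⌉₊ + 1) (x := y) (by push_cast; linarith [Nat.le_ceil R])
  have e : ((2 : ℝ) • S y - y) - ((2 : ℝ) • T y - y) = (2 : ℝ) • (S y - T y) := by
    rw [smul_sub]; abel
  rw [e, norm_smul, Real.norm_ofNat] at hle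
  linarith [hball _ _ hST]

theorem FirmlyNonexpansive.exists_pos_forall_rhoHat_lt_norm_iterate_sub_lt
    (hT : FirmlyNonexpansive T) (x : E) (k : ℕ) {η : ℝ} (hη : 0 < η) :
    ∃ r > 0, ∀ S, FirmlyNonexpansive S → rhoHat S T < r → ‖S^[k] x - T^[k] x‖ < η := by
  induction k generalizing η with
  | zero => exact ⟨1, one_pos, fun S _ _ => by simpa using hη⟩
  | succ k ih =>
    obtain ⟨r₁, hr₁, h₁⟩ := ih (half_pos hη)
    obtain ⟨r₂, hr₂, h₂⟩ :=
      hT.exists_pos_forall_rhoHat_lt_norm_sub_lt (‖T^[k] x‖ + η / 2) (half_pos hη)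
    refine ⟨min r₁ r₂, lt_min hr₁ hr₂, fun S hS hST => ?_⟩
    have hk := h₁ S hS (hST.trans_le (min_le_left _ _))
    have hball : ‖S^[k] x‖ ≤ ‖T^[k] x‖ + η / 2 := by
      linarith [norm_le_norm_add_norm_sub' (S^[k] x) (T^[k] x)]
    rw [Function.iterate_succ_apply', Function.iterate_succ_apply']
    calc ‖S (S^[k] x) - T (T^[k] x)‖
        ≤ ‖S (S^[k] x) - T (S^[k] x)‖ + ‖T (S^[k] x) - T (T^[k] x)‖ :=
          norm_sub_le_norm_sub_add_norm_sub _ _ _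
      _ < η / 2 + η / 2 := add_lt_add_of_lt_of_le
          (h₂ S hS (hST.trans_le (min_le_right _ _)) _ hball) ((hT.nonexpansive _ _).trans hk.le)
      _ = η := add_halves η

theorem FirmlyNonexpansive.tendsto_rhoHat_const_smul (hT : FirmlyNonexpansive T) :
    Tendsto (fun c : ℝ => rhoHat (c • T) T) (𝓝 1) (𝓝 0) := by
  refine tendsto_rho_zero fun n => ?_
  have hbound : Tendsto (fun c : ℝ => 2 * |c - 1| * (n + ‖T 0‖)) (𝓝 1) (𝓝 0) := by
    have hcont : Continuous fun c : ℝ => 2 * |c - 1| * (n + ‖T 0‖) := by fun_prop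
    simpa using hcont.tendsto 1
  refine squeeze_zero (fun c => ballSup_nonneg _ _ n) (fun c => ballSup_le fun x hx => ?_) hbound
  have e : ((2 : ℝ) • (c • T) x - x) - ((2 : ℝ) • T x - x) = (2 * (c - 1)) • T x := by
    simp only [Pi.smul_apply, smul_smul, mul_sub, sub_smul, mul_one]; abel
  have hTx : ‖T x‖ ≤ n + ‖T 0‖ := by
    have h := hT.nonexpansive x 0
    rw [sub_zero] at h
    linarith [norm_le_norm_add_norm_sub' (T x) (T 0)]
  rw [e, norm_smul, Real.norm_eq_abs, abs_mul, abs_two]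
  gcongr

end RhoHat

section AlmostRegularMaps

variable {E : Type*} [NormedAddCommGroup E] [InnerProductSpace ℝ E] {T : E → E}

def almostRegularMaps (n : ℕ) : Set (E → E) :=
  {S | FirmlyNonexpansive S ∧ ∃ N : ℕ, ‖S^[N + 1] 0 - S^[N] 0‖ < 1 / ((n : ℝ) + 1)}

theorem FirmlyNonexpansive.forall_mem_almostRegularMaps_iff (hT : FirmlyNonexpansive T) :
    (∀ n, T ∈ almostRegularMaps n) ↔ ∀ x, AsymptoticallyRegularAt T x := by
  have hAt0 := (hT.nonexpansive.antitone_norm_iterate_succ_sub 0)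
    |>.tendsto_zero_iff_forall_exists_lt_one_div fun _ => norm_nonneg _
  exact ⟨fun h => hT.asymptoticallyRegularAt (hAt0.2 fun n => (h n).2),
    fun h n => ⟨hT, hAt0.1 (h 0) n⟩⟩

theorem iInter_almostRegularMaps :
    ⋂ n, almostRegularMaps n =
      {T : E → E | FirmlyNonexpansive T ∧ ∀ x, AsymptoticallyRegularAt T x} := by
  ext T
  rw [Set.mem_iInter]
  exact ⟨fun h => ⟨(h 0).1, (h 0).1.forall_mem_almostRegularMaps_iff.1 h⟩,
    fun ⟨hT, h⟩ => hT.forall_mem_almostRegularMaps_iff.2 h⟩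

theorem exists_pos_forall_rhoHat_lt_mem_almostRegularMaps {n : ℕ}
    (hT : T ∈ almostRegularMaps n) :
    ∃ r > 0, ∀ S, FirmlyNonexpansive S → rhoHat S T < r → S ∈ almostRegularMaps n := by
  obtain ⟨hT, N, hN⟩ := hT
  have hgap : 0 < (1 / ((n : ℝ) + 1) - ‖T^[N + 1] 0 - T^[N] 0‖) / 2 := by linarith
  obtain ⟨r₁, hr₁, h₁⟩ :=
    hT.exists_pos_forall_rhoHat_lt_norm_iterate_sub_lt 0 (N + 1) hgap
  obtain ⟨r₂, hr₂, h₂⟩ := hT.exists_pos_forall_rhoHat_lt_norm_iterate_sub_lt 0 N hgap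
  refine ⟨min r₁ r₂, lt_min hr₁ hr₂, fun S hS hST => ⟨hS, N, ?_⟩⟩
  have hN₁ := h₁ S hS (hST.trans_le (min_le_left _ _))
  have hN₂ := h₂ S hS (hST.trans_le (min_le_right _ _))
  rw [norm_sub_rev] at hN₂
  linarith [norm_sub_le_norm_sub_add_norm_sub (S^[N + 1] 0) (T^[N + 1] 0) (S^[N] 0),
    norm_sub_le_norm_sub_add_norm_sub (T^[N + 1] 0) (T^[N] 0) (S^[N] 0)]

theorem FirmlyNonexpansive.exists_mem_almostRegularMaps_rhoHat_lt (hT : FirmlyNonexpansive T)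
    (n : ℕ) {ε : ℝ} (hε : 0 < ε) : ∃ S ∈ almostRegularMaps n, rhoHat S T < ε := by
  have hnear : ∀ᶠ c in 𝓝[<] (1 : ℝ), rhoHat (c • T) T < ε :=
    (hT.tendsto_rhoHat_const_smul.mono_left nhdsWithin_le_nhds).eventually (gt_mem_nhds hε)
  obtain ⟨c, hcε, hc⟩ := (hnear.and (Ioo_mem_nhdsLT one_pos)).exists
  refine ⟨c • T, ?_, hcε⟩
  exact (hT.const_smul hc.1.le hc.2.le).forall_mem_almostRegularMaps_iff.2
    (hT.nonexpansive.asymptoticallyRegularAt_const_smul hc.1.le hc.2) n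

end AlmostRegularMaps

/-- generically, firmly nonexpansive maps are asymptotically regular. -/
theorem generic_asymptotic_regularity :
    ∃ O : ℕ → Set (X → X),
      (∀ n, O n ⊆ {T : X → X | FirmlyNonexpansive T}) ∧
      (∀ n, ∀ T ∈ O n, ∃ r > (0 : ℝ), ∀ S : X → X, FirmlyNonexpansive S → rhoHat S T < r → S ∈ O n) ∧
      (∀ n, ∀ T : X → X, FirmlyNonexpansive T → ∀ ε : ℝ, 0 < ε → ∃ S ∈ O n, rhoHat S T < ε) ∧
      (⋂ n, O n) = {T : X → X | FirmlyNonexpansive T ∧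
        ∀ x : X, Tendsto (fun n : ℕ => ‖T^[n + 1] x - T^[n] x‖) atTop (nhds 0)} :=
  ⟨almostRegularMaps, fun _ _ hT => hT.1,
    fun _ _ => exists_pos_forall_rhoHat_lt_mem_almostRegularMaps,
    fun n _ hT _ hε => hT.exists_mem_almostRegularMaps_rhoHat_lt n hε,
    iInter_almostRegularMaps⟩
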